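/- arXiv:1404.4464 — 7 statements merged into one kernel-verified Lean document; each statement's English description precedes it below -/
import Mathlib

section
/- Let h : [0,T] → ℝ be absolutely continuous with a.e. derivative h' satisfying h'(t) ≥ 0 for a.e. t ∈ [0,T] and h' square integrable. For every θ ∈ [0,T], the function φ⁽θ⁾ defined by φ⁽θ⁾(t) := e^{βt} ( σ(1−γ) ∫_θ^t e^{−β(1−γ)s} h'(s) ds )^{1/(1−γ)} for t ∈ [θ,T] and φ⁽θ⁾(t) := 0 for t ∈ [0,θ) is nonnegative, absolutely continuous on [0,T], satisfies φ⁽θ⁾(0) = 0, and solves the degenerate controlled ODE (φ⁽θ⁾)'(t) = β φ⁽θ⁾(t) + σ (φ⁽θ⁾(t))^γ h'(t) for a.e. t ∈ [0,T]. -/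
/-!
On `[θ, T]` put `u t = σ (1 - γ) ∫_θ^t e^{-β(1-γ)s} h'(s) ds`, so that `φ = e^{βt} u^p` with
`p = 1/(1-γ) ≥ 1`. Since `h' ≥ 0`, `u` is nonnegative; being an integral it is absolutely
continuous, and `x ↦ x^p` is `C¹`, so `φ` is absolutely continuous on `[θ, T]` and the
fundamental theorem of calculus for absolutely continuous functions applies. At the almost
every point where `u' = σ (1 - γ) e^{-β(1-γ)t} h'(t)` (Lebesgue differentiation), the chain rule
gives `φ' = βφ + p e^{βt} u^{p-1} u'`, and the weight `e^{-β(1-γ)t}` is exactly what turns the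
second term into `σ φ^γ h'`, because `φ^γ = e^{βγt} u^{p-1}`. On `[0, θ]` both `φ` and
`βφ + σφ^γ h'` vanish (`γ > 0`), so the two pieces glue.
-/

open MeasureTheory Set Real

open scoped NNReal

theorem LipschitzOnWith.comp_absolutelyContinuousOnInterval {X Y : Type*} [PseudoMetricSpace X]
    [PseudoMetricSpace Y] {g : X → Y} {f : ℝ → X} {K : ℝ≥0} {s : Set X} {a b : ℝ}
    (hg : LipschitzOnWith K g s) (hf : AbsolutelyContinuousOnInterval f a b)
    (hfs : MapsTo f (uIcc a b) s) : AbsolutelyContinuousOnInterval (g ∘ f) a b := by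
  rw [absolutelyContinuousOnInterval_iff] at hf ⊢
  intro ε hε
  obtain ⟨δ, hδ, hfδ⟩ := hf (ε / (K + 1)) (by positivity)
  refine ⟨δ, hδ, fun E hE hEδ ↦ ?_⟩
  calc ∑ i ∈ Finset.range E.1, dist (g (f (E.2 i).1)) (g (f (E.2 i).2))
      ≤ ∑ i ∈ Finset.range E.1, K * dist (f (E.2 i).1) (f (E.2 i).2) :=
        Finset.sum_le_sum fun i hi ↦
          hg.dist_le_mul _ (hfs (hE.1 i hi).1) _ (hfs (hE.1 i hi).2)
    _ = K * ∑ i ∈ Finset.range E.1, dist (f (E.2 i).1) (f (E.2 i).2) := (Finset.mul_sum ..).symm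
    _ ≤ K * (ε / (K + 1)) := by gcongr; exact (hfδ E hE hEδ).le
    _ < ε := by
      rw [mul_div_assoc', div_lt_iff₀ (by positivity)]
      nlinarith

theorem ContDiff.comp_absolutelyContinuousOnInterval {F f : ℝ → ℝ} {a b : ℝ}
    (hF : ContDiff ℝ 1 F) (hf : AbsolutelyContinuousOnInterval f a b) :
    AbsolutelyContinuousOnInterval (F ∘ f) a b := by
  obtain ⟨C, hC⟩ := isCompact_uIcc.exists_bound_of_continuousOn hf.continuousOn
  obtain ⟨K, hK⟩ := hF.contDiffOn.exists_lipschitzOnWith (s := Metric.closedBall 0 C) one_ne_zero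
    (convex_closedBall 0 C) (isCompact_closedBall 0 C)
  exact hK.comp_absolutelyContinuousOnInterval hf fun x hx ↦ mem_closedBall_zero_iff.mpr (hC x hx)

theorem hasDerivAt_exp_mul_rpow_one_div_one_sub {β σ γ w x : ℝ} {u : ℝ → ℝ} (hγ₀ : 0 ≤ γ)
    (hγ₁ : γ < 1) (hu₀ : 0 ≤ u x)
    (hu : HasDerivAt u (σ * (1 - γ) * (exp (-β * (1 - γ) * x) * w)) x) :
    HasDerivAt (fun t ↦ exp (β * t) * u t ^ (1 / (1 - γ)))
      (β * (exp (β * x) * u x ^ (1 / (1 - γ))) +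
        σ * (exp (β * x) * u x ^ (1 / (1 - γ))) ^ γ * w) x := by
  set p := 1 / (1 - γ) with hp
  have h1γ : 0 < 1 - γ := by linarith
  have hp₁ : 1 ≤ p := by rw [hp, le_div_iff₀ h1γ]; linarith
  have hpγ : p * γ = p - 1 := by rw [hp]; field_simp; ring
  have hexp : HasDerivAt (fun t ↦ exp (β * t)) (exp (β * x) * β) x := by
    simpa using ((hasDerivAt_id x).const_mul β).exp
  have hpow_γ : (exp (β * x) * u x ^ p) ^ γ = exp (β * γ * x) * u x ^ (p - 1) := by
    rw [mul_rpow (exp_nonneg _) (rpow_nonneg hu₀ _), ← exp_mul, ← rpow_mul hu₀, hpγ]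
    ring_nf
  have hweight : exp (β * x) * (p * (1 - γ)) * exp (-β * (1 - γ) * x) = exp (β * γ * x) := by
    rw [hp, div_mul_cancel₀ 1 h1γ.ne', mul_one, ← exp_add]
    ring_nf
  refine (hexp.mul ((hasDerivAt_rpow_const (Or.inr hp₁)).comp x hu)).congr_deriv ?_
  rw [Function.comp_apply, hpow_γ, ← hweight]
  ring

theorem intervalIntegrable_and_eq_integral_of_vanishing_left {φ φ' : ℝ → ℝ} {a θ b : ℝ}
    (hθ : θ ∈ Icc a b) (hφ : ∀ t ∈ Icc a θ, φ t = 0) (hφ' : ∀ t ∈ Icc a θ, φ' t = 0)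
    (hint : IntervalIntegrable φ' volume θ b) (heq : ∀ t ∈ Icc θ b, φ t = ∫ s in θ..t, φ' s) :
    IntervalIntegrable φ' volume a b ∧ ∀ t ∈ Icc a b, φ t = ∫ s in a..t, φ' s := by
  have hint₀ : IntervalIntegrable φ' volume a θ :=
    (intervalIntegrable_congr fun s hs ↦ (hφ' s (uIcc_of_le hθ.1 ▸ uIoc_subset_uIcc hs)).symm).mp
      intervalIntegrable_const
  have hzero : ∀ t ∈ Icc a θ, ∫ s in a..t, φ' s = 0 := fun t ht ↦ by
    rw [intervalIntegral.integral_congr (g := fun _ ↦ 0) fun s hs ↦ hφ' s ?_,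
      intervalIntegral.integral_zero]
    rw [uIcc_of_le ht.1] at hs
    exact ⟨hs.1, hs.2.trans ht.2⟩
  refine ⟨hint₀.trans hint, fun t ht ↦ ?_⟩
  rcases le_total t θ with htθ | hθt
  · rw [hφ t ⟨ht.1, htθ⟩, hzero t ⟨ht.1, htθ⟩]
  · rw [← intervalIntegral.integral_add_adjacent_intervals hint₀
      (hint.mono_set (uIcc_subset_uIcc_left (uIcc_of_le hθ.2 ▸ ⟨hθt, ht.2⟩))),
      hzero θ ⟨hθ.1, le_rfl⟩, zero_add, heq t ⟨hθt, ht.2⟩]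

noncomputable section

namespace DegenerateODE

variable (β σ γ θ : ℝ) (w : ℝ → ℝ)

def primitive (t : ℝ) : ℝ := σ * (1 - γ) * ∫ s in θ..t, exp (-β * (1 - γ) * s) * w s

/-- The formula defining `φ⁽θ⁾` on `[θ, T]`. -/
def branch (t : ℝ) : ℝ := exp (β * t) * primitive β σ γ θ w t ^ (1 / (1 - γ))

variable {β σ γ θ w} {b : ℝ}

theorem branch_self (hγ : γ < 1) : branch β σ γ θ w θ = 0 := by
  have : 1 / (1 - γ) ≠ 0 := one_div_ne_zero (by linarith)
  simp only [branch, primitive, intervalIntegral.integral_same, mul_zero, zero_rpow this]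

theorem primitive_nonneg (hσ : 0 ≤ σ) (hγ : γ ≤ 1)
    (hw : ∀ᵐ s ∂volume.restrict (Icc θ b), 0 ≤ w s) {t : ℝ} (ht : t ∈ Icc θ b) :
    0 ≤ primitive β σ γ θ w t := by
  refine mul_nonneg (mul_nonneg hσ (by linarith)) ?_
  refine intervalIntegral.integral_nonneg_of_ae_restrict ht.1 ?_
  filter_upwards [ae_restrict_of_ae_restrict_of_subset (Icc_subset_Icc le_rfl ht.2) hw]
    with s hs using mul_nonneg (exp_nonneg _) hs

theorem branch_nonneg (hσ : 0 ≤ σ) (hγ : γ ≤ 1)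
    (hw : ∀ᵐ s ∂volume.restrict (Icc θ b), 0 ≤ w s) {t : ℝ} (ht : t ∈ Icc θ b) :
    0 ≤ branch β σ γ θ w t :=
  mul_nonneg (exp_nonneg _) (rpow_nonneg (primitive_nonneg hσ hγ hw ht) _)

theorem intervalIntegrable_exp_mul (hw : IntervalIntegrable w volume θ b) :
    IntervalIntegrable (fun s ↦ exp (-β * (1 - γ) * s) * w s) volume θ b :=
  hw.continuousOn_mul (by fun_prop)

theorem absolutelyContinuousOnInterval_branch (hγ₀ : 0 ≤ γ) (hγ₁ : γ < 1)
    (hw : IntervalIntegrable w volume θ b) :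
    AbsolutelyContinuousOnInterval (branch β σ γ θ w) θ b := by
  have hp : ((1 : ℕ) : ℝ) ≤ 1 / (1 - γ) := by
    rw [Nat.cast_one, le_div_iff₀ (by linarith)]; linarith
  have hprim : AbsolutelyContinuousOnInterval (primitive β σ γ θ w) θ b :=
    ((intervalIntegrable_exp_mul hw).absolutelyContinuousOnInterval_intervalIntegral
      left_mem_uIcc).const_mul _
  exact (ContDiffOn.absolutelyContinuousOnInterval (by fun_prop)).fun_mul
    ((contDiff_rpow_const_of_le hp).comp_absolutelyContinuousOnInterval hprim)

theorem ae_hasDerivAt_branch (hσ : 0 ≤ σ) (hγ₀ : 0 ≤ γ) (hγ₁ : γ < 1) (hθb : θ ≤ b)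
    (hw : IntervalIntegrable w volume θ b) (hw₀ : ∀ᵐ s ∂volume.restrict (Icc θ b), 0 ≤ w s) :
    ∀ᵐ s, s ∈ uIcc θ b → HasDerivAt (branch β σ γ θ w)
      (β * branch β σ γ θ w s + σ * branch β σ γ θ w s ^ γ * w s) s := by
  filter_upwards [(intervalIntegrable_exp_mul hw).ae_hasDerivAt_integral] with s hs hsθb
  exact hasDerivAt_exp_mul_rpow_one_div_one_sub hγ₀ hγ₁
    (primitive_nonneg hσ hγ₁.le hw₀ (uIcc_of_le hθb ▸ hsθb))
    ((hs hsθb θ left_mem_uIcc).const_mul _)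

theorem eq_integral_of_eqOn_branch {φ : ℝ → ℝ} (hφ : EqOn φ (branch β σ γ θ w) (Icc θ b))
    (hσ : 0 ≤ σ) (hγ₀ : 0 ≤ γ) (hγ₁ : γ < 1) (hθb : θ ≤ b)
    (hw : IntervalIntegrable w volume θ b) (hw₀ : ∀ᵐ s ∂volume.restrict (Icc θ b), 0 ≤ w s) :
    IntervalIntegrable (fun s ↦ β * φ s + σ * φ s ^ γ * w s) volume θ b ∧
      ∀ t ∈ Icc θ b, φ t = ∫ s in θ..t, (β * φ s + σ * φ s ^ γ * w s) := by
  have hac : AbsolutelyContinuousOnInterval (branch β σ γ θ w) θ b :=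
    absolutelyContinuousOnInterval_branch hγ₀ hγ₁ hw
  have hderiv : ∀ᵐ s, s ∈ uIoc θ b →
      deriv (branch β σ γ θ w) s = β * φ s + σ * φ s ^ γ * w s := by
    filter_upwards [ae_hasDerivAt_branch (β := β) hσ hγ₀ hγ₁ hθb hw hw₀] with s hs hsθb
    have hsθb' : s ∈ Icc θ b := uIcc_of_le hθb ▸ uIoc_subset_uIcc hsθb
    rw [hφ hsθb', (hs (uIcc_of_le hθb ▸ hsθb')).deriv]
  refine ⟨hac.intervalIntegrable_deriv.congr_ae ?_, fun t ht ↦ ?_⟩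
  · rwa [Filter.EventuallyEq, ae_restrict_iff' measurableSet_uIoc]
  · have hsub : uIcc θ t ⊆ uIcc θ b := uIcc_subset_uIcc_left (uIcc_of_le hθb ▸ ht)
    rw [hφ ht, ← sub_zero (branch β σ γ θ w t), ← branch_self hγ₁,
      ← (hac.mono hsub).integral_deriv_eq_sub]
    refine intervalIntegral.integral_congr_ae ?_
    filter_upwards [hderiv] with s hs hsθt
    exact hs (uIoc_subset_uIoc_of_uIcc_subset_uIcc hsub hsθt)

end DegenerateODE

end

open DegenerateODE

theorem one_parameter_family_solves_degenerate_ODE_general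
    (σ β γ T : ℝ) (hσ : 0 < σ) (hγ : γ ∈ Set.Ico (1/2 : ℝ) 1)
    (h' : ℝ → ℝ)
    (hL2 : MeasureTheory.MemLp h' 2 (volume.restrict (Set.Icc 0 T)))
    (hpos : ∀ᵐ t ∂(volume.restrict (Set.Icc 0 T)), 0 ≤ h' t)
    (θ : ℝ) (hθ : θ ∈ Set.Icc 0 T)
    (φ : ℝ → ℝ)
    (hφ : ∀ t, φ t = if t < θ then 0 else
      Real.exp (β * t) *
        (σ * (1 - γ) * ∫ s in θ..t, Real.exp (-β * (1 - γ) * s) * h' s) ^ (1/(1 - γ))) :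
    (∀ t ∈ Set.Icc 0 T, 0 ≤ φ t) ∧ φ 0 = 0 ∧
    ∃ φ' : ℝ → ℝ, IntervalIntegrable φ' volume 0 T ∧
      (∀ t ∈ Set.Icc 0 T, φ t = ∫ s in (0:ℝ)..t, φ' s) ∧
      (∀ᵐ t ∂(volume.restrict (Set.Icc 0 T)),
        φ' t = β * φ t + σ * φ t ^ γ * h' t) := by
  obtain ⟨hγ₀, hγ₁⟩ := hγ
  have hφ_branch : ∀ t, θ ≤ t → φ t = branch β σ γ θ h' t := fun t ht ↦ by
    rw [hφ, if_neg (not_lt.mpr ht)]; rfl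
  have hφ_zero : ∀ t ≤ θ, φ t = 0 := fun t ht ↦ by
    rcases ht.lt_or_eq with ht | rfl
    · rw [hφ, if_pos ht]
    · rw [hφ_branch t le_rfl, branch_self hγ₁]
  have hL1 : IntegrableOn h' (Icc 0 T) := hL2.integrable one_le_two
  have hw : IntervalIntegrable h' volume θ T :=
    (hL1.mono_set (uIcc_of_le hθ.2 ▸ Icc_subset_Icc_left hθ.1)).intervalIntegrable
  have hw₀ := ae_restrict_of_ae_restrict_of_subset (Icc_subset_Icc_left hθ.1) hpos
  obtain ⟨hint, hφ_eq⟩ := eq_integral_of_eqOn_branch (fun t ht ↦ hφ_branch t ht.1) hσ.le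
    (by linarith) hγ₁ hθ.2 hw hw₀
  obtain ⟨hint₀, hφ_eq₀⟩ := intervalIntegrable_and_eq_integral_of_vanishing_left hθ
    (fun t ht ↦ hφ_zero t ht.2)
    (fun t ht ↦ by simp only [hφ_zero t ht.2, zero_rpow (by linarith : γ ≠ 0)]; ring) hint hφ_eq
  refine ⟨fun t ht ↦ ?_, hφ_zero 0 hθ.1, _, hint₀, hφ_eq₀, ae_of_all _ fun _ ↦ rfl⟩
  rcases le_total t θ with htθ | hθt
  · exact (hφ_zero t htθ).ge
  · rw [hφ_branch t hθt]
    exact branch_nonneg hσ.le hγ₁.le hw₀ ⟨hθt, ht.2⟩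

/-- For nonnegative control `h'`, each member `φ⁽θ⁾` of the one-parameter
family is a nonnegative absolutely continuous solution, vanishing at 0, of the degenerate
controlled ODE `φ' = βφ + σ φ^γ h'` a.e. on `[0,T]`. -/
theorem one_parameter_family_solves_degenerate_ODE
    (σ β γ T : ℝ) (hσ : 0 < σ) (hγ : γ ∈ Set.Ico (1/2 : ℝ) 1) (hT : 0 < T)
    (h h' : ℝ → ℝ)
    (hL2 : MeasureTheory.MemLp h' 2 (volume.restrict (Set.Icc 0 T)))
    (hhftc : ∀ t ∈ Set.Icc 0 T, h t = h 0 + ∫ s in (0:ℝ)..t, h' s)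
    (hpos : ∀ᵐ t ∂(volume.restrict (Set.Icc 0 T)), 0 ≤ h' t)
    (θ : ℝ) (hθ : θ ∈ Set.Icc 0 T)
    (φ : ℝ → ℝ)
    (hφ : ∀ t, φ t = if t < θ then 0 else
      Real.exp (β * t) *
        (σ * (1 - γ) * ∫ s in θ..t, Real.exp (-β * (1 - γ) * s) * h' s) ^ (1/(1 - γ))) :
    (∀ t ∈ Set.Icc 0 T, 0 ≤ φ t) ∧ φ 0 = 0 ∧
    ∃ φ' : ℝ → ℝ, IntervalIntegrable φ' volume 0 T ∧
      (∀ t ∈ Set.Icc 0 T, φ t = ∫ s in (0:ℝ)..t, φ' s) ∧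
      (∀ᵐ t ∂(volume.restrict (Set.Icc 0 T)),
        φ' t = β * φ t + σ * φ t ^ γ * h' t) :=
  one_parameter_family_solves_degenerate_ODE_general σ β γ T hσ hγ h' hL2 hpos θ hθ φ hφ
end

section
/- Let (Ω, 𝓕, P) be a probability space, F : Ω → [0,∞) a measurable function with ∫ F dP = 1 such that F·log F is P-integrable, and let Q be the probability measure with dQ = F dP. Set H(Q|P) := ∫ F log F dP. Then for every measurable set A ∈ 𝓕 with Q(A) > 0 one has log( P(A) / Q(A) ) ≥ −( e^{−1} + H(Q|P) ) / Q(A). -/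
/-!
On `A`, Jensen's inequality for the convex function `x ↦ x log x` and the average of `F` over `A`
(which is `Q(A)/P(A)`) gives `∫_A F log F dP ≥ Q(A) log (Q(A)/P(A))`. On `Aᶜ` one only uses
`x log x ≥ -e⁻¹` and `P(Aᶜ) ≤ 1`. Adding the two bounds and dividing by `Q(A)` gives the claim.
-/

open MeasureTheory Real

lemma Real.neg_exp_neg_one_le_mul_log {x : ℝ} (hx : 0 ≤ x) : -exp (-1) ≤ x * log x := by
  rcases hx.eq_or_lt with rfl | hx
  · simp [(exp_pos _).le]
  · have he : exp (-1) * exp 1 = 1 := by rw [← exp_add]; norm_num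
    have h := self_sub_one_le_mul_log (mul_nonneg hx.le (exp_pos 1).le)
    rw [log_mul hx.ne' (exp_pos 1).ne', log_exp] at h
    nlinarith [exp_pos (-1)]

section

variable {α : Type*} [MeasurableSpace α] {μ : Measure α} {f : α → ℝ} {s : Set α}

lemma measureReal_withDensity_ofReal (hs : MeasurableSet s) (hf0 : 0 ≤ᵐ[μ.restrict s] f)
    (hf : IntegrableOn f s μ) :
    (μ.withDensity fun x => ENNReal.ofReal (f x)).real s = ∫ x in s, f x ∂μ := by
  rw [measureReal_def, withDensity_apply _ hs, ← ofReal_integral_eq_lintegral_ofReal hf hf0,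
    ENNReal.toReal_ofReal (integral_nonneg_of_ae hf0)]

lemma setIntegral_mul_log_div_le_setIntegral_mul_log (hs0 : μ s ≠ 0) (hs : μ s ≠ ⊤)
    (hf0 : 0 ≤ᵐ[μ.restrict s] f) (hf : IntegrableOn f s μ)
    (hfl : IntegrableOn (fun x => f x * log (f x)) s μ) :
    (∫ x in s, f x ∂μ) * log ((∫ x in s, f x ∂μ) / μ.real s) ≤
      ∫ x in s, f x * log (f x) ∂μ := by
  have hjensen := convexOn_mul_log.map_set_average_le continuous_mul_log.continuousOn
    isClosed_Ici hs0 hs hf0 hf hfl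
  have hμs : 0 < μ.real s := ENNReal.toReal_pos hs0 hs
  simp only [setAverage_eq, smul_eq_mul] at hjensen
  rw [← div_eq_inv_mul, ← div_eq_inv_mul, le_div_iff₀ hμs] at hjensen
  calc _ = (∫ x in s, f x ∂μ) / μ.real s * log ((∫ x in s, f x ∂μ) / μ.real s) * μ.real s := by
        field_simp
    _ ≤ _ := hjensen

lemma neg_exp_neg_one_mul_measureReal_le_setIntegral_mul_log (hs : μ s ≠ ⊤)
    (hf0 : 0 ≤ᵐ[μ.restrict s] f) (hfl : IntegrableOn (fun x => f x * log (f x)) s μ) :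
    -(exp (-1) * μ.real s) ≤ ∫ x in s, f x * log (f x) ∂μ := by
  calc -(exp (-1) * μ.real s) = ∫ _ in s, -exp (-1) ∂μ := by
        rw [setIntegral_const, smul_eq_mul]; ring
    _ ≤ _ := integral_mono_ae (integrableOn_const hs) hfl
        (hf0.mono fun _ hx => neg_exp_neg_one_le_mul_log hx)

end

theorem relative_entropy_bound_general
    {Ω : Type*} [MeasurableSpace Ω]
    (P : Measure Ω) [IsProbabilityMeasure P]
    (F : Ω → ℝ) (hFnn : ∀ ω, 0 ≤ F ω)
    (hFone : ∫ ω, F ω ∂P = 1)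
    (hent : Integrable (fun ω => F ω * Real.log (F ω)) P)
    (Q : Measure Ω) (hQ : Q = P.withDensity (fun ω => ENNReal.ofReal (F ω)))
    (A : Set Ω) (hA : MeasurableSet A) (hQA : 0 < (Q A).toReal) :
    Real.log ((P A).toReal / (Q A).toReal) ≥
      -(Real.exp (-1) + ∫ ω, F ω * Real.log (F ω) ∂P) / (Q A).toReal := by
  simp only [← measureReal_def] at hQA ⊢
  have hFint : Integrable F P := .of_integral_ne_zero (by simp [hFone])
  have hF0 {s : Set Ω} : 0 ≤ᵐ[P.restrict s] F := .of_forall hFnn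
  have hQA_eq : Q.real A = ∫ ω in A, F ω ∂P := by
    rw [hQ]; exact measureReal_withDensity_ofReal hA hF0 hFint.integrableOn
  have hPA : P A ≠ 0 := fun h => by
    simp [hQA_eq, Measure.restrict_eq_zero.mpr h] at hQA
  have hin := setIntegral_mul_log_div_le_setIntegral_mul_log hPA (measure_ne_top P A) hF0
    hFint.integrableOn hent.integrableOn
  have hout := neg_exp_neg_one_mul_measureReal_le_setIntegral_mul_log (measure_ne_top P Aᶜ) hF0
    hent.integrableOn
  have hPAc : P.real Aᶜ ≤ 1 := measureReal_le_one
  have hsplit := integral_add_compl hA hent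
  rw [← hQA_eq] at hin
  have hkey : Q.real A * Real.log (Q.real A / P.real A) ≤
      Real.exp (-1) + ∫ ω, F ω * Real.log (F ω) ∂P := by
    nlinarith [Real.exp_pos (-1), measureReal_nonneg (μ := P) (s := Aᶜ)]
  rw [ge_iff_le, div_le_iff₀ hQA, ← neg_neg (Real.log _), ← Real.log_inv, inv_div]
  linarith

/-- Relative entropy lower bound:
`log(P(A)/Q(A)) ≥ −(e⁻¹ + H(Q|P)) / Q(A)` where `dQ = F dP` and
`H(Q|P) = ∫ F log F dP`. -/
theorem relative_entropy_bound
    {Ω : Type*} [MeasurableSpace Ω]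
    (P : Measure Ω) [IsProbabilityMeasure P]
    (F : Ω → ℝ) (hFmeas : Measurable F) (hFnn : ∀ ω, 0 ≤ F ω)
    (hFone : ∫ ω, F ω ∂P = 1)
    (hent : Integrable (fun ω => F ω * Real.log (F ω)) P)
    (Q : Measure Ω) (hQ : Q = P.withDensity (fun ω => ENNReal.ofReal (F ω)))
    (A : Set Ω) (hA : MeasurableSet A) (hQA : 0 < (Q A).toReal) :
    Real.log ((P A).toReal / (Q A).toReal) ≥
      -(Real.exp (-1) + ∫ ω, F ω * Real.log (F ω) ∂P) / (Q A).toReal :=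
  relative_entropy_bound_general P F hFnn hFone hent Q hQ A hA hQA
end

section
/- Let φ : [0,T] → [0,∞) be absolutely continuous with φ(0) = 0 and I_T(φ) < ∞. Define h₀ by h₀(0) = 0 and h₀'(t) := ((φ'(t) − βφ(t))/(σ φ(t)^γ)) · 1_{φ(t)≠0}. Then: (i) h₀ ∈ H; (ii) φ'(t) = βφ(t) + σ φ(t)^γ h₀'(t) for a.e. t ∈ [0,T]; (iii) (1/2)∫₀ᵀ h₀'(t)² dt = I_T(φ); and (iv) for every h ∈ H satisfying φ'(t) = βφ(t) + σ φ(t)^γ h'(t) for a.e. t ∈ [0,T], one has (1/2)∫₀ᵀ h'(t)² dt ≥ I_T(φ). Hence I_T(φ) = min{ (1/2)∫₀ᵀ h'(t)² dt : h ∈ H, φ'(t) = βφ(t) + σφ(t)^γ h'(t) a.e. }. -/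
/-!
Wherever `φ > 0` the controlled equation forces `h' = h₀'`, and pointwise `h₀'²` is `σ⁻²`
times the integrand of `I_T`; so `h₀` has energy `I_T(φ)` and no admissible control has less.
The one non-algebraic point is the equation on `{φ = 0}`, i.e. `φ' = 0` a.e. there: almost
every point of a set is an accumulation point of it (isolated points are countable), and by
Lebesgue differentiation almost every point is one where the primitive `φ` has derivative
`φ'`, which must then vanish.
-/

open MeasureTheory Set Filter Topology

/-- An element of the Cameron–Martin space `H`: an absolutely continuous function on
`[0,T]` with square-integrable a.e. derivative. -/
structure CameronMartin (T : ℝ) where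
  toFun : ℝ → ℝ
  deriv : ℝ → ℝ
  intInt : IntervalIntegrable deriv MeasureTheory.volume 0 T
  memL2 : MeasureTheory.MemLp deriv 2 (MeasureTheory.volume.restrict (Set.Icc 0 T))
  ftc : ∀ t ∈ Set.Icc 0 T, toFun t = toFun 0 + ∫ s in (0:ℝ)..t, deriv s

theorem measure_diff_derivedSet_eq_zero {X : Type*} [TopologicalSpace X]
    [SecondCountableTopology X] [MeasurableSpace X] (μ : Measure X) [NullSingletonClass μ]
    (s : Set X) : μ (s \ derivedSet s) = 0 := by
  have : DiscreteTopology ↥(s \ derivedSet s) := discreteTopology_of_noAccPts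
    fun x hx hacc => hx.2 (derivedSet_mono _ _ sdiff_subset hacc)
  exact (countable_coe_iff.mp
    (TopologicalSpace.separableSpace_iff_countable.mp inferInstance)).measure_zero μ

theorem ae_hasDerivAt_eq_zero_of_eq {F : Type*} [NormedAddCommGroup F] [NormedSpace ℝ F]
    (f : ℝ → F) (c : F) : ∀ᵐ x, f x = c → ∀ f', HasDerivAt f f' x → f' = 0 := by
  filter_upwards [measure_eq_zero_iff_ae_notMem.mp
    (measure_diff_derivedSet_eq_zero volume (f ⁻¹' {c}))] with x hx hfx f' hf
  have hacc : AccPt x (𝓟 (f ⁻¹' {c})) := by_contra fun h => hx ⟨hfx, h⟩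
  rw [← hf.deriv]
  exact deriv_zero_of_frequently_const (accPt_iff_frequently_nhdsNE.mp hacc)

theorem IntervalIntegrable.ae_eq_zero_of_integral_eq_zero {f : ℝ → ℝ} {a b : ℝ}
    (hf : IntervalIntegrable f volume a b) :
    ∀ᵐ t ∂volume.restrict (Icc a b), ∫ s in a..t, f s = 0 → f t = 0 := by
  rw [ae_restrict_iff' measurableSet_Icc]
  filter_upwards [hf.ae_hasDerivAt_integral,
    ae_hasDerivAt_eq_zero_of_eq (fun t => ∫ s in a..t, f s) 0] with t hderiv hzero ht
  exact fun h => hzero h _ (hderiv (Icc_subset_uIcc ht) a left_mem_uIcc)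

noncomputable def minimalControl (σ β γ p v : ℝ) : ℝ :=
  if p = 0 then 0 else (v - β * p) / (σ * p ^ γ)

noncomputable def rateIntegrand (β γ p v : ℝ) : ℝ :=
  if p = 0 then 0 else ((v - β * p) / p ^ γ) ^ 2

section minimalControl

variable {σ β γ p v : ℝ}

theorem minimalControl_sq :
    minimalControl σ β γ p v ^ 2 = (σ ^ 2)⁻¹ * rateIntegrand β γ p v := by
  unfold minimalControl rateIntegrand
  split_ifs
  · simp
  · rw [div_pow, mul_pow, div_pow]
    field_simp

theorem eq_add_mul_minimalControl (hσ : σ ≠ 0) (hp : 0 ≤ p) (hv : p = 0 → v = 0) :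
    v = β * p + σ * p ^ γ * minimalControl σ β γ p v := by
  unfold minimalControl
  split_ifs with h
  · simp [h, hv h]
  · have : 0 < p ^ γ := Real.rpow_pos_of_pos (hp.lt_of_ne' h) γ
    field_simp
    ring

theorem minimalControl_eq_of_eq_add_mul (hσ : σ ≠ 0) (hp : 0 < p) {k : ℝ}
    (hk : v = β * p + σ * p ^ γ * k) : minimalControl σ β γ p v = k := by
  have : 0 < p ^ γ := Real.rpow_pos_of_pos hp γ
  rw [minimalControl, if_neg hp.ne', hk]
  field_simp
  ring

theorem minimalControl_sq_le_of_eq_add_mul (hσ : σ ≠ 0) (hp : 0 ≤ p) {k : ℝ}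
    (hk : v = β * p + σ * p ^ γ * k) : minimalControl σ β γ p v ^ 2 ≤ k ^ 2 := by
  rcases hp.eq_or_lt with h | h
  · simp [minimalControl, ← h, sq_nonneg]
  · rw [minimalControl_eq_of_eq_add_mul hσ h hk]

theorem measurable_minimalControl :
    Measurable (Function.uncurry (minimalControl σ β γ)) := by
  unfold minimalControl Function.uncurry
  refine Measurable.ite (measurableSet_eq_fun measurable_fst measurable_const) measurable_const ?_
  fun_prop

theorem memLp_two_minimalControl {μ : Measure ℝ} {φ φ' : ℝ → ℝ}
    (hφ : AEMeasurable φ μ) (hφ' : AEMeasurable φ' μ)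
    (hrate : Integrable (fun t => rateIntegrand β γ (φ t) (φ' t)) μ) :
    MemLp (fun t => minimalControl σ β γ (φ t) (φ' t)) 2 μ := by
  have hmeas : AEMeasurable (fun t => minimalControl σ β γ (φ t) (φ' t)) μ :=
    measurable_minimalControl.comp_aemeasurable (hφ.prodMk hφ')
  rw [memLp_two_iff_integrable_sq hmeas.aestronglyMeasurable]
  simpa only [minimalControl_sq] using hrate.const_mul (σ ^ 2)⁻¹

end minimalControl

theorem minimal_control_realizes_rate_function_general
    (σ β γ T : ℝ) (hσ : 0 < σ) (hT : 0 < T)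
    (φ φ' : ℝ → ℝ)
    (hφint : IntervalIntegrable φ' volume 0 T)
    (hφftc : ∀ t ∈ Set.Icc 0 T, φ t = ∫ s in (0:ℝ)..t, φ' s)
    (hφnn : ∀ t ∈ Set.Icc 0 T, 0 ≤ φ t)
    (hfin : IntegrableOn
      (fun t => if φ t = 0 then 0 else ((φ' t - β * φ t) / φ t ^ γ)^2) (Set.Icc 0 T))
    (h0' : ℝ → ℝ)
    (hh0' : ∀ t, h0' t = if φ t = 0 then 0 else (φ' t - β * φ t) / (σ * φ t ^ γ)) :
    -- (i) h₀ ∈ H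
    (MemLp h0' 2 (volume.restrict (Set.Icc 0 T)) ∧
      IntervalIntegrable h0' volume 0 T) ∧
    -- (ii) φ solves the controlled ODE with control h₀
    (∀ᵐ t ∂(volume.restrict (Set.Icc 0 T)),
      φ' t = β * φ t + σ * φ t ^ γ * h0' t) ∧
    -- (iii) the energy of h₀ equals I_T(φ)
    ((1/2) * ∫ t in Set.Icc 0 T, (h0' t)^2 =
      (1/(2*σ^2)) * ∫ t in Set.Icc 0 T,
        (if φ t = 0 then 0 else ((φ' t - β * φ t) / φ t ^ γ)^2)) ∧
    -- (iv) any other admissible control has at least this energy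
    (∀ h : CameronMartin T,
      (∀ᵐ t ∂(volume.restrict (Set.Icc 0 T)),
        φ' t = β * φ t + σ * φ t ^ γ * h.deriv t) →
      (1/(2*σ^2)) * (∫ t in Set.Icc 0 T,
          (if φ t = 0 then 0 else ((φ' t - β * φ t) / φ t ^ γ)^2)) ≤
        (1/2) * ∫ t in Set.Icc 0 T, (h.deriv t)^2) := by
  obtain rfl : h0' = fun t => minimalControl σ β γ (φ t) (φ' t) := funext hh0'
  have hφ'int : IntegrableOn φ' (Icc 0 T) :=
    (intervalIntegrable_iff_integrableOn_Icc_of_le hT.le).mp hφint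
  have hφcont : ContinuousOn φ (Icc 0 T) :=
    ((intervalIntegral.continuousOn_primitive_interval' hφint left_mem_uIcc).mono
      Icc_subset_uIcc).congr hφftc
  have hnn : ∀ᵐ t ∂volume.restrict (Icc 0 T), 0 ≤ φ t :=
    (ae_restrict_iff' measurableSet_Icc).mpr (.of_forall hφnn)
  have hvanish : ∀ᵐ t ∂volume.restrict (Icc 0 T), φ t = 0 → φ' t = 0 := by
    filter_upwards [hφint.ae_eq_zero_of_integral_eq_zero, ae_restrict_mem measurableSet_Icc]
      with t ht htIcc
    rwa [hφftc t htIcc]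
  have hmem :
      MemLp (fun t => minimalControl σ β γ (φ t) (φ' t)) 2 (volume.restrict (Icc 0 T)) :=
    memLp_two_minimalControl (hφcont.aemeasurable measurableSet_Icc) hφ'int.aemeasurable hfin
  have henergy : (1/2) * ∫ t in Icc 0 T, minimalControl σ β γ (φ t) (φ' t) ^ 2 =
      (1/(2*σ^2)) * ∫ t in Icc 0 T, rateIntegrand β γ (φ t) (φ' t) := by
    simp only [minimalControl_sq, integral_const_mul]
    field_simp
  refine ⟨⟨hmem, (intervalIntegrable_iff_integrableOn_Icc_of_le hT.le).mpr
    (hmem.integrable one_le_two)⟩, ?_, henergy, fun h hh => ?_⟩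
  · filter_upwards [hnn, hvanish] with t hnn hvanish
    exact eq_add_mul_minimalControl hσ.ne' hnn hvanish
  · refine henergy.symm.trans_le
      (mul_le_mul_of_nonneg_left (integral_mono_ae ?_ ?_ ?_) one_half_pos.le)
    · exact hmem.integrable_sq
    · exact h.memL2.integrable_sq
    · filter_upwards [hnn, hh] with t hnn hh
      exact minimalControl_sq_le_of_eq_add_mul hσ.ne' hnn hh

/-- The minimal-energy control `h₀` with
`h₀'(t) = ((φ'(t) − βφ(t))/(σφ(t)^γ))·1_{φ(t)≠0}`: it belongs to `H`, steers the ODE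
along `φ`, its energy equals `I_T(φ)`, and every other admissible control has at least
this energy; hence `I_T(φ)` is the minimum of `(1/2)∫ h'²` over admissible controls. -/
theorem minimal_control_realizes_rate_function
    (σ β γ T : ℝ) (hσ : 0 < σ) (hγ : γ ∈ Set.Ico (1/2 : ℝ) 1) (hT : 0 < T)
    (φ φ' : ℝ → ℝ)
    (hφint : IntervalIntegrable φ' volume 0 T)
    (hφftc : ∀ t ∈ Set.Icc 0 T, φ t = ∫ s in (0:ℝ)..t, φ' s)
    (hφnn : ∀ t ∈ Set.Icc 0 T, 0 ≤ φ t)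
    (hfin : IntegrableOn
      (fun t => if φ t = 0 then 0 else ((φ' t - β * φ t) / φ t ^ γ)^2) (Set.Icc 0 T))
    (h0' : ℝ → ℝ)
    (hh0' : ∀ t, h0' t = if φ t = 0 then 0 else (φ' t - β * φ t) / (σ * φ t ^ γ)) :
    -- (i) h₀ ∈ H
    (MemLp h0' 2 (volume.restrict (Set.Icc 0 T)) ∧
      IntervalIntegrable h0' volume 0 T) ∧
    -- (ii) φ solves the controlled ODE with control h₀
    (∀ᵐ t ∂(volume.restrict (Set.Icc 0 T)),
      φ' t = β * φ t + σ * φ t ^ γ * h0' t) ∧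
    -- (iii) the energy of h₀ equals I_T(φ)
    ((1/2) * ∫ t in Set.Icc 0 T, (h0' t)^2 =
      (1/(2*σ^2)) * ∫ t in Set.Icc 0 T,
        (if φ t = 0 then 0 else ((φ' t - β * φ t) / φ t ^ γ)^2)) ∧
    -- (iv) any other admissible control has at least this energy
    (∀ h : CameronMartin T,
      (∀ᵐ t ∂(volume.restrict (Set.Icc 0 T)),
        φ' t = β * φ t + σ * φ t ^ γ * h.deriv t) →
      (1/(2*σ^2)) * (∫ t in Set.Icc 0 T,
          (if φ t = 0 then 0 else ((φ' t - β * φ t) / φ t ^ γ)^2)) ≤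
        (1/2) * ∫ t in Set.Icc 0 T, (h.deriv t)^2) :=
  minimal_control_realizes_rate_function_general σ β γ T hσ hT φ φ' hφint hφftc hφnn hfin h0' hh0'
end

section
/- Let φ : [0,T] → [0,∞) be absolutely continuous with φ(0) = 0 and I_T(φ) < ∞. Then ψ := φ^{1−γ} (i.e. ψ(t) = φ(t)^{1−γ}) is absolutely continuous on [0,T] with ψ(0) = 0, its a.e. derivative satisfies ψ'(t) = (1−γ) φ'(t) φ(t)^{−γ} · 1_{φ(t)>0} for a.e. t ∈ [0,T], and (1/(2σ²(1−γ)²)) ∫₀ᵀ ( ψ'(t) − β(1−γ)ψ(t) )² dt = I_T(φ). -/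
/-!
For `ε > 0` the map `y ↦ (y + ε)^(1-γ)` is Lipschitz on `[0, ∞)`, so `(φ + ε)^(1-γ)` is
absolutely continuous and the chain rule gives
`(φ t + ε)^(1-γ) - ε^(1-γ) = ∫₀ᵗ (1-γ) (φ + ε)^(-γ) φ'`.
Since `φ ≥ 0`, every zero of `φ` inside `(0, T)` is a local minimum, so `φ' = 0` a.e. on
`{φ = 0}`; hence these integrands are dominated by `|ψ'|`, `ψ' = (1-γ) φ' φ^(-γ) 1_{φ>0}`, and
letting `ε → 0` gives `φ^(1-γ) = ∫ ψ'`. Finally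
`ψ' - β(1-γ) φ^(1-γ) = (1-γ) (φ' - βφ) / φ^γ` on `{φ > 0}`; the square of the right-hand side is
`(1-γ)²` times the integrand of the rate function, which makes `ψ'` integrable (an `L²` function
plus a bounded one) and gives the formula for the rate.
-/

open MeasureTheory Set Filter Topology NNReal

namespace AbsolutelyContinuousOnInterval

variable {X Y : Type*} [PseudoMetricSpace X] [PseudoMetricSpace Y] {f g : ℝ → X} {a b : ℝ}

theorem congr (hf : AbsolutelyContinuousOnInterval f a b) (hfg : EqOn f g (uIcc a b)) :
    AbsolutelyContinuousOnInterval g a b := by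
  unfold AbsolutelyContinuousOnInterval at hf ⊢
  refine Tendsto.congr' ?_ hf
  filter_upwards [mem_inf_of_right (mem_principal_self _)] with E hE
  exact Finset.sum_congr rfl fun i hi => by rw [hfg (hE.1 i hi).1, hfg (hE.1 i hi).2]

theorem _root_.LipschitzOnWith.comp_absolutelyContinuousOnInterval_s7 {h : X → Y} {K : ℝ≥0}
    {s : Set X} (hh : LipschitzOnWith K h s) (hf : AbsolutelyContinuousOnInterval f a b)
    (hfs : MapsTo f (uIcc a b) s) : AbsolutelyContinuousOnInterval (h ∘ f) a b := by
  unfold AbsolutelyContinuousOnInterval at hf ⊢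
  have hK := hf.const_mul (K : ℝ)
  rw [mul_zero] at hK
  refine squeeze_zero' (Eventually.of_forall fun E => Finset.sum_nonneg fun _ _ => dist_nonneg)
    ?_ hK
  filter_upwards [mem_inf_of_right (mem_principal_self _)] with E hE
  rw [Finset.mul_sum]
  exact Finset.sum_le_sum fun i hi =>
    hh.dist_le_mul _ (hfs (hE.1 i hi).1) _ (hfs (hE.1 i hi).2)

end AbsolutelyContinuousOnInterval

section Primitive

variable {f F : ℝ → ℝ} {a b : ℝ}

theorem ae_hasDerivAt_of_eqOn_primitive (hf : IntervalIntegrable f volume a b)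
    (hF : ∀ t ∈ Icc a b, F t = ∫ s in a..t, f s) :
    ∀ᵐ x, x ∈ Ioo a b → HasDerivAt F (f x) x := by
  filter_upwards [hf.ae_hasDerivAt_integral] with x hx hxab
  have hmem : x ∈ uIcc a b := Icc_subset_uIcc (Ioo_subset_Icc_self hxab)
  refine (hx hmem a left_mem_uIcc).congr_of_eventuallyEq ?_
  filter_upwards [Ioo_mem_nhds hxab.1 hxab.2] with y hy using hF y (Ioo_subset_Icc_self hy)

theorem ae_eq_zero_of_nonneg_primitive_eq_zero (hf : IntervalIntegrable f volume a b)
    (hF : ∀ t ∈ Icc a b, F t = ∫ s in a..t, f s) (hnn : ∀ t ∈ Icc a b, 0 ≤ F t) :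
    ∀ᵐ x, x ∈ Ioo a b → F x = 0 → f x = 0 := by
  filter_upwards [ae_hasDerivAt_of_eqOn_primitive hf hF] with x hx hxab hFx
  have hmin : IsLocalMin F x := by
    filter_upwards [Ioo_mem_nhds hxab.1 hxab.2] with y hy
    rw [hFx]
    exact hnn y (Ioo_subset_Icc_self hy)
  exact hmin.hasDerivAt_eq_zero (hx hxab)

theorem continuousOn_of_eqOn_primitive (hf : IntervalIntegrable f volume a b)
    (hF : ∀ t ∈ Icc a b, F t = ∫ s in a..t, f s) : ContinuousOn F (Icc a b) :=
  ((intervalIntegral.continuousOn_primitive_interval' hf left_mem_uIcc).mono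
    Icc_subset_uIcc).congr hF

theorem integral_comp_mul_eq_sub_of_eqOn_primitive {g g' : ℝ → ℝ} {s : Set ℝ} {K : ℝ≥0}
    (hab : a ≤ b) (hf : IntervalIntegrable f volume a b)
    (hF : ∀ t ∈ Icc a b, F t = ∫ s in a..t, f s) (hs : Convex ℝ s)
    (hg : ∀ y ∈ s, HasDerivAt g (g' y) y) (hg' : ∀ y ∈ s, ‖g' y‖₊ ≤ K)
    (hFs : MapsTo F (Icc a b) s) :
    ∫ x in a..b, g' (F x) * f x = g (F b) - g (F a) := by
  have hFac : AbsolutelyContinuousOnInterval F a b :=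
    (hf.absolutelyContinuousOnInterval_intervalIntegral left_mem_uIcc).congr fun t ht =>
      (hF t (by rwa [uIcc_of_le hab] at ht)).symm
  have hgF : AbsolutelyContinuousOnInterval (g ∘ F) a b :=
    (hs.lipschitzOnWith_of_nnnorm_hasDerivWithin_le (fun y hy => (hg y hy).hasDerivWithinAt)
      hg').comp_absolutelyContinuousOnInterval_s7 hFac (by rwa [uIcc_of_le hab])
  refine (intervalIntegral.integral_congr_ae ?_).trans hgF.integral_deriv_eq_sub
  have hb : ∀ᵐ x : ℝ, x ≠ b := by simp [ae_iff, measure_singleton]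
  filter_upwards [ae_hasDerivAt_of_eqOn_primitive hf hF, hb] with x hx hxb hxab
  rw [uIoc_of_le hab] at hxab
  have hxab' : x ∈ Ioo a b := ⟨hxab.1, hxab.2.lt_of_ne hxb⟩
  exact (((hg _ (hFs (Ioo_subset_Icc_self hxab'))).comp x (hx hxab')).deriv).symm

end Primitive

section ShiftedPower

variable {γ y d : ℝ}

theorem norm_mul_rpow_add_mul_le (hγ : 0 ≤ γ) (hy : 0 ≤ y) (hd : y = 0 → d = 0) {ε : ℝ}
    (hε : 0 < ε) :
    ‖(1 - γ) * (y + ε) ^ (-γ) * d‖ ≤ ‖if 0 < y then (1 - γ) * d * y ^ (-γ) else 0‖ := by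
  rcases hy.eq_or_lt with rfl | hpos
  · simp [hd rfl]
  rw [if_pos hpos, mul_right_comm]
  simp only [norm_mul, Real.norm_of_nonneg (Real.rpow_nonneg hpos.le _),
    Real.norm_of_nonneg (Real.rpow_nonneg (hpos.le.trans (le_add_of_nonneg_right hε.le)) _)]
  gcongr _ * ?_
  exact Real.rpow_le_rpow_of_nonpos hpos (le_add_of_nonneg_right hε.le) (neg_nonpos.2 hγ)

theorem tendsto_mul_rpow_add_mul (hy : 0 ≤ y) (hd : y = 0 → d = 0) :
    Tendsto (fun ε => (1 - γ) * (y + ε) ^ (-γ) * d) (𝓝[>] 0)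
      (𝓝 (if 0 < y then (1 - γ) * d * y ^ (-γ) else 0)) := by
  rcases hy.eq_or_lt with rfl | hpos
  · simp [hd rfl]
  rw [if_pos hpos, mul_right_comm]
  have hcont : ContinuousAt (fun ε => (1 - γ) * (y + ε) ^ (-γ) * d) 0 := by
    refine ((continuousAt_const.add continuousAt_id).rpow_const ?_).const_mul _ |>.mul_const _
    simp [hpos.ne']
  simpa [mul_right_comm] using hcont.tendsto.mono_left nhdsWithin_le_nhds

end ShiftedPower

section PowerOfPrimitive

variable {f F : ℝ → ℝ} {a b γ : ℝ}

theorem rpow_add_sub_rpow_add_eq_integral (hab : a ≤ b) (hγ : 0 ≤ γ)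
    (hf : IntervalIntegrable f volume a b) (hF : ∀ t ∈ Icc a b, F t = ∫ s in a..t, f s)
    (hnn : ∀ t ∈ Icc a b, 0 ≤ F t) {ε : ℝ} (hε : 0 < ε) :
    (F b + ε) ^ (1 - γ) - (F a + ε) ^ (1 - γ) =
      ∫ x in a..b, (1 - γ) * (F x + ε) ^ (-γ) * f x := by
  have hderiv : ∀ y ∈ Ici (0 : ℝ), HasDerivAt (fun y => (y + ε) ^ (1 - γ))
      ((1 - γ) * (y + ε) ^ (-γ)) y := fun y hy => by
    convert ((hasDerivAt_id' y).add_const ε).rpow_const (p := 1 - γ)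
      (Or.inl (by linarith [mem_Ici.1 hy])) using 1
    rw [one_mul, sub_sub_cancel_left]
  have hbound : ∀ y ∈ Ici (0 : ℝ), ‖(1 - γ) * (y + ε) ^ (-γ)‖₊ ≤ ‖1 - γ‖₊ * ‖ε ^ (-γ)‖₊ :=
    fun y hy => by
    rw [nnnorm_mul]
    gcongr
    rw [← NNReal.coe_le_coe, coe_nnnorm, coe_nnnorm,
      Real.norm_of_nonneg (Real.rpow_nonneg (by linarith [mem_Ici.1 hy]) _),
      Real.norm_of_nonneg (Real.rpow_nonneg hε.le _)]
    exact Real.rpow_le_rpow_of_nonpos hε (le_add_of_nonneg_left hy) (neg_nonpos.2 hγ)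
  exact (integral_comp_mul_eq_sub_of_eqOn_primitive hab hf hF (convex_Ici 0) hderiv hbound
    hnn).symm

theorem rpow_eq_integral_of_eqOn_primitive (hab : a ≤ b) (hγ0 : 0 ≤ γ) (hγ1 : γ < 1)
    (hf : IntervalIntegrable f volume a b) (hF : ∀ t ∈ Icc a b, F t = ∫ s in a..t, f s)
    (hnn : ∀ t ∈ Icc a b, 0 ≤ F t)
    (hD : IntegrableOn (fun x => if 0 < F x then (1 - γ) * f x * F x ^ (-γ) else 0) (Icc a b)) :
    F b ^ (1 - γ) = ∫ x in a..b, if 0 < F x then (1 - γ) * f x * F x ^ (-γ) else 0 := by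
  have hFa : F a = 0 := by rw [hF a (left_mem_Icc.2 hab), intervalIntegral.integral_same]
  have hlhs : Tendsto (fun ε => (F b + ε) ^ (1 - γ) - (F a + ε) ^ (1 - γ)) (𝓝[>] 0)
      (𝓝 (F b ^ (1 - γ))) := by
    have hcont : Continuous fun ε : ℝ => (F b + ε) ^ (1 - γ) - (F a + ε) ^ (1 - γ) :=
      ((continuous_const.add continuous_id).rpow_const fun _ => Or.inr (by linarith)).sub
        ((continuous_const.add continuous_id).rpow_const fun _ => Or.inr (by linarith))
    simpa [hFa, Real.zero_rpow (sub_ne_zero.2 hγ1.ne')] using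
      (hcont.tendsto 0).mono_left nhdsWithin_le_nhds
  have hpt : ∀ᵐ x, x ∈ uIoc a b → 0 ≤ F x ∧ (F x = 0 → f x = 0) := by
    have hb : ∀ᵐ x : ℝ, x ≠ b := by simp [ae_iff, measure_singleton]
    filter_upwards [ae_eq_zero_of_nonneg_primitive_eq_zero hf hF hnn, hb] with x hx hxb hxab
    rw [uIoc_of_le hab] at hxab
    exact ⟨hnn x (Ioc_subset_Icc_self hxab), hx ⟨hxab.1, hxab.2.lt_of_ne hxb⟩⟩
  have hrhs := intervalIntegral.tendsto_integral_filter_of_dominated_convergence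
    (l := 𝓝[>] 0) (F := fun ε x => (1 - γ) * (F x + ε) ^ (-γ) * f x)
    (fun x => ‖if 0 < F x then (1 - γ) * f x * F x ^ (-γ) else 0‖) ?meas ?bound
    ((intervalIntegrable_iff_integrableOn_Icc_of_le hab).2 hD.norm)
    (by filter_upwards [hpt] with x hx hxab using tendsto_mul_rpow_add_mul (hx hxab).1 (hx hxab).2)
  case bound =>
    filter_upwards [self_mem_nhdsWithin] with ε hε
    filter_upwards [hpt] with x hx hxab
    exact norm_mul_rpow_add_mul_le hγ0 (hx hxab).1 (hx hxab).2 hε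
  case meas =>
    filter_upwards [self_mem_nhdsWithin] with ε (hε : 0 < ε)
    rw [uIoc_of_le hab]
    refine (ContinuousOn.aestronglyMeasurable ?_ measurableSet_Ioc).mul hf.1.aestronglyMeasurable
    refine continuousOn_const.mul ((((continuousOn_of_eqOn_primitive hf hF).mono
      Ioc_subset_Icc_self).add continuousOn_const).rpow_const fun x hx => Or.inl ?_)
    exact (add_pos_of_nonneg_of_pos (hnn x (Ioc_subset_Icc_self hx)) hε).ne'
  refine tendsto_nhds_unique hlhs (hrhs.congr' ?_)
  filter_upwards [self_mem_nhdsWithin] with ε hε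
  exact (rpow_add_sub_rpow_add_eq_integral hab hγ0 hf hF hnn hε).symm

end PowerOfPrimitive

section RateFunction

variable {f F : ℝ → ℝ} {a b β γ : ℝ}

theorem powerTransform_deriv_sub_drift_eq {y d : ℝ} (hγ : γ < 1) (hy : 0 ≤ y) :
    (if 0 < y then (1 - γ) * d * y ^ (-γ) else 0) - β * (1 - γ) * y ^ (1 - γ) =
      (1 - γ) * (if y = 0 then 0 else (d - β * y) / y ^ γ) := by
  rcases hy.eq_or_lt with rfl | hpos
  · simp [Real.zero_rpow (sub_ne_zero.2 hγ.ne')]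
  rw [if_pos hpos, if_neg hpos.ne', Real.rpow_neg hpos.le, Real.rpow_sub hpos, Real.rpow_one]
  field_simp

theorem integrableOn_powerTransform_deriv (hγ : γ < 1) (hFc : ContinuousOn F (Icc a b))
    (hfm : AEStronglyMeasurable f (volume.restrict (Icc a b))) (hnn : ∀ t ∈ Icc a b, 0 ≤ F t)
    (hfin : IntegrableOn (fun t => if F t = 0 then 0 else ((f t - β * F t) / F t ^ γ) ^ 2)
      (Icc a b)) :
    IntegrableOn (fun t => if 0 < F t then (1 - γ) * f t * F t ^ (-γ) else 0) (Icc a b) := by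
  set ρ : ℝ → ℝ := fun t => if F t = 0 then 0 else (f t - β * F t) / F t ^ γ
  have hFm : AEMeasurable F (volume.restrict (Icc a b)) :=
    (hFc.aestronglyMeasurable measurableSet_Icc).aemeasurable
  have hρm : AEStronglyMeasurable ρ (volume.restrict (Icc a b)) := by
    have hρ : ρ = {t | F t = 0}ᶜ.indicator fun t => (f t - β * F t) / F t ^ γ := by
      ext t
      by_cases h : F t = 0 <;> simp [ρ, h]
    rw [hρ]
    exact ((hfm.aemeasurable.sub (hFm.const_mul β)).div
      (hFm.pow_const γ)).aestronglyMeasurable.indicator₀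
      (hFm.nullMeasurable (measurableSet_singleton 0)).compl
  have hρ : IntegrableOn ρ (Icc a b) := by
    refine ((memLp_two_iff_integrable_sq hρm).2 ?_).integrable one_le_two
    simp only [ρ, ite_pow, zero_pow two_ne_zero]
    exact hfin
  have hpow : IntegrableOn (fun t => F t ^ (1 - γ)) (Icc a b) :=
    (hFc.rpow_const fun _ _ => Or.inr (by linarith)).integrableOn_Icc
  refine IntegrableOn.congr_fun ((hρ.const_mul (1 - γ)).add (hpow.const_mul (β * (1 - γ))))
    (fun t ht => ?_) measurableSet_Icc
  have := powerTransform_deriv_sub_drift_eq (β := β) (d := f t) hγ (hnn t ht)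
  simp only [Pi.add_apply, ρ]
  linarith

end RateFunction

theorem power_transform_of_finite_rate_path_general
    (σ β γ T : ℝ) (hγ : γ ∈ Set.Ico (1/2 : ℝ) 1) (hT : 0 < T)
    (φ φ' : ℝ → ℝ)
    (hφint : IntervalIntegrable φ' volume 0 T)
    (hφftc : ∀ t ∈ Set.Icc 0 T, φ t = ∫ s in (0:ℝ)..t, φ' s)
    (hφnn : ∀ t ∈ Set.Icc 0 T, 0 ≤ φ t)
    (hfin : IntegrableOn
      (fun t => if φ t = 0 then 0 else ((φ' t - β * φ t) / φ t ^ γ)^2) (Set.Icc 0 T)) :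
    (φ 0) ^ (1 - γ) = 0 ∧
    ∃ ψ' : ℝ → ℝ, IntervalIntegrable ψ' volume 0 T ∧
      (∀ t ∈ Set.Icc 0 T, φ t ^ (1 - γ) = ∫ s in (0:ℝ)..t, ψ' s) ∧
      (∀ᵐ t ∂(volume.restrict (Set.Icc 0 T)),
        ψ' t = if 0 < φ t then (1 - γ) * φ' t * φ t ^ (-γ) else 0) ∧
      (1/(2*σ^2*(1-γ)^2)) * (∫ t in Set.Icc 0 T,
          (ψ' t - β*(1-γ) * φ t ^ (1-γ))^2) =
        (1/(2*σ^2)) * ∫ t in Set.Icc 0 T,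
          (if φ t = 0 then 0 else ((φ' t - β * φ t) / φ t ^ γ)^2) := by
  obtain ⟨hγ0, hγ1⟩ : 0 ≤ γ ∧ γ < 1 := ⟨by linarith [hγ.1], hγ.2⟩
  set ψ' : ℝ → ℝ := fun t => if 0 < φ t then (1 - γ) * φ' t * φ t ^ (-γ) else 0
  have hψ' : IntegrableOn ψ' (Icc 0 T) :=
    integrableOn_powerTransform_deriv hγ1 (continuousOn_of_eqOn_primitive hφint hφftc)
      ((intervalIntegrable_iff_integrableOn_Icc_of_le hT.le).1 hφint).aestronglyMeasurable
      hφnn hfin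
  refine ⟨?_, ψ', (intervalIntegrable_iff_integrableOn_Icc_of_le hT.le).2 hψ', fun t ht => ?_,
    ae_of_all _ fun _ => rfl, ?_⟩
  · rw [hφftc 0 (left_mem_Icc.2 hT.le), intervalIntegral.integral_same,
      Real.zero_rpow (sub_ne_zero.2 hγ1.ne')]
  · have hsub : Icc 0 t ⊆ Icc 0 T := Icc_subset_Icc_right ht.2
    exact rpow_eq_integral_of_eqOn_primitive ht.1 hγ0 hγ1
      (hφint.mono_set (by simpa [uIcc_of_le ht.1, uIcc_of_le hT.le] using hsub))
      (fun s hs => hφftc s (hsub hs)) (fun s hs => hφnn s (hsub hs)) (hψ'.mono_set hsub)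
  · have hsq : ∀ t ∈ Icc 0 T, (ψ' t - β * (1 - γ) * φ t ^ (1 - γ)) ^ 2 =
        (1 - γ) ^ 2 * if φ t = 0 then 0 else ((φ' t - β * φ t) / φ t ^ γ) ^ 2 := fun t ht => by
      rw [powerTransform_deriv_sub_drift_eq hγ1 (hφnn t ht), mul_pow, ite_pow,
        zero_pow two_ne_zero]
    rw [setIntegral_congr_fun measurableSet_Icc hsq, integral_const_mul, one_div_mul_eq_div,
      mul_comm ((1 - γ) ^ 2), mul_div_mul_right _ _ (pow_ne_zero 2 (sub_ne_zero.2 hγ1.ne')),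
      one_div_mul_eq_div]

/-- If `φ ≥ 0` is absolutely continuous with `φ(0)=0` and `I_T(φ) < ∞`,
then `ψ = φ^{1−γ}` is absolutely continuous with `ψ(0)=0`, a.e. derivative
`ψ' = (1−γ)φ'φ^{−γ}1_{φ>0}`, and
`(1/(2σ²(1−γ)²))∫₀ᵀ(ψ' − β(1−γ)ψ)² = I_T(φ)`. -/
theorem power_transform_of_finite_rate_path
    (σ β γ T : ℝ) (hσ : 0 < σ) (hγ : γ ∈ Set.Ico (1/2 : ℝ) 1) (hT : 0 < T)
    (φ φ' : ℝ → ℝ)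
    (hφint : IntervalIntegrable φ' volume 0 T)
    (hφftc : ∀ t ∈ Set.Icc 0 T, φ t = ∫ s in (0:ℝ)..t, φ' s)
    (hφnn : ∀ t ∈ Set.Icc 0 T, 0 ≤ φ t)
    (hfin : IntegrableOn
      (fun t => if φ t = 0 then 0 else ((φ' t - β * φ t) / φ t ^ γ)^2) (Set.Icc 0 T)) :
    (φ 0) ^ (1 - γ) = 0 ∧
    ∃ ψ' : ℝ → ℝ, IntervalIntegrable ψ' volume 0 T ∧
      (∀ t ∈ Set.Icc 0 T, φ t ^ (1 - γ) = ∫ s in (0:ℝ)..t, ψ' s) ∧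
      (∀ᵐ t ∂(volume.restrict (Set.Icc 0 T)),
        ψ' t = if 0 < φ t then (1 - γ) * φ' t * φ t ^ (-γ) else 0) ∧
      (1/(2*σ^2*(1-γ)^2)) * (∫ t in Set.Icc 0 T,
          (ψ' t - β*(1-γ) * φ t ^ (1-γ))^2) =
        (1/(2*σ^2)) * ∫ t in Set.Icc 0 T,
          (if φ t = 0 then 0 else ((φ' t - β * φ t) / φ t ^ γ)^2) :=
  power_transform_of_finite_rate_path_general σ β γ T hγ hT φ φ' hφint hφftc hφnn hfin
end

section
/- Let T > 0, b ∈ ℝ with b ≠ 0, and z ∈ ℝ. For every absolutely continuous ψ : [0,T] → ℝ with ψ(0) = 0, ψ(T) = z and square-integrable a.e. derivative ψ', one has ∫₀ᵀ ( ψ'(t) − b ψ(t) )² dt ≥ 2b e^{−2bT} z² / (1 − e^{−2bT}), and equality holds for the function ψ*(t) := z ( e^{bt} − e^{−bt} ) / ( e^{bT} − e^{−bT} ). (Note the right-hand side is nonnegative for either sign of b.) -/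
/-!
With `u = ψ' - bψ` one has `(e^{-bt} ψ)' = e^{-bt} u`, so integrating the absolutely continuous
function `e^{-bt} ψ` over `[0, T]` gives `e^{-bT} z = ∫₀ᵀ e^{-bt} u(t) dt`. Cauchy–Schwarz against
`e^{-bt}` then yields `e^{-2bT} z² ≤ (∫₀ᵀ u²) · ∫₀ᵀ e^{-2bt} dt = (∫₀ᵀ u²) · (1 - e^{-2bT}) / (2b)`.
For `ψ*` the residual `ψ*' - bψ*` is a multiple of `e^{-bt}`, the equality case of Cauchy–Schwarz.
-/

open MeasureTheory Set

theorem sq_integral_mul_le_integral_sq_mul_integral_sq {α : Type*} [MeasurableSpace α]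
    {μ : Measure α} {f g : α → ℝ} (hf : MemLp f 2 μ) (hg : MemLp g 2 μ) :
    (∫ x, f x * g x ∂μ) ^ 2 ≤ (∫ x, f x ^ 2 ∂μ) * ∫ x, g x ^ 2 ∂μ := by
  have inner_toLp : ∀ {u v : α → ℝ} (hu : MemLp u 2 μ) (hv : MemLp v 2 μ),
      inner ℝ (hu.toLp u) (hv.toLp v) = ∫ x, u x * v x ∂μ := by
    intro u v hu hv
    rw [L2.inner_def]
    refine integral_congr_ae ?_
    filter_upwards [hu.coeFn_toLp, hv.coeFn_toLp] with x hux hvx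
    simp [hux, hvx, mul_comm]
  simpa only [inner_toLp, sq] using real_inner_mul_inner_self_le (hf.toLp f) (hg.toLp g)

theorem ContinuousOn.memLp_restrict_of_isCompact {X E : Type*} [TopologicalSpace X]
    [SecondCountableTopology X] [MeasurableSpace X] [OpensMeasurableSpace X]
    [NormedAddCommGroup E] {μ : Measure X} [IsFiniteMeasureOnCompacts μ] {s : Set X} {f : X → E}
    {p : ENNReal} (hf : ContinuousOn f s) (hs : IsCompact s) (hsm : MeasurableSet s) :
    MemLp f p (μ.restrict s) := by
  have : IsFiniteMeasure (μ.restrict s) := isFiniteMeasure_restrict.2 hs.measure_lt_top.ne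
  obtain ⟨M, hM⟩ := hs.exists_bound_of_continuousOn hf
  exact .of_bound (hf.aestronglyMeasurable hsm) M ((ae_restrict_mem hsm).mono hM)

theorem integral_exp_neg_mul_mul_sub_primitive {f : ℝ → ℝ} {a b : ℝ}
    (hf : IntervalIntegrable f volume a b) (c : ℝ) :
    ∫ t in a..b, Real.exp (-c * t) * (f t - c * ∫ s in a..t, f s) =
      Real.exp (-c * b) * ∫ s in a..b, f s := by
  have hE : ∀ t, HasDerivAt (fun t => Real.exp (-c * t)) (-c * Real.exp (-c * t)) t := fun t => by
    simpa [mul_comm] using ((hasDerivAt_id t).const_mul (-c)).exp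
  have hE_ac : AbsolutelyContinuousOnInterval (fun t => Real.exp (-c * t)) a b :=
    ContDiffOn.absolutelyContinuousOnInterval (by fun_prop)
  have hF_ac := hf.absolutelyContinuousOnInterval_intervalIntegral left_mem_uIcc
  have hprod := hE_ac.integral_deriv_mul_eq_sub hF_ac
  simp only [intervalIntegral.integral_same, mul_zero, sub_zero] at hprod
  rw [← hprod]
  refine intervalIntegral.integral_congr_ae ?_
  filter_upwards [hf.ae_hasDerivAt_integral] with t hF ht
  rw [(hE t).deriv, (hF (uIoc_subset_uIcc ht) a left_mem_uIcc).deriv]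
  ring

theorem sq_exp_neg_mul_mul_div_le_integral_sq {T c : ℝ} (hT : 0 ≤ T) {ψ ψ' : ℝ → ℝ}
    (hL2 : MemLp ψ' 2 (volume.restrict (Icc 0 T)))
    (hftc : ∀ t ∈ Icc 0 T, ψ t = ∫ s in (0:ℝ)..t, ψ' s) :
    (Real.exp (-c * T) * ψ T) ^ 2 / ∫ t in Icc 0 T, Real.exp (-c * t) ^ 2 ≤
      ∫ t in Icc 0 T, (ψ' t - c * ψ t) ^ 2 := by
  have hψ'int : IntervalIntegrable ψ' volume 0 T :=
    (intervalIntegrable_iff_integrableOn_Icc_of_le hT).2 (hL2.integrable one_le_two)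
  have hψ_cont : ContinuousOn ψ (Icc 0 T) := by
    rw [← uIcc_of_le hT]
    refine (intervalIntegral.continuousOn_primitive_interval' hψ'int left_mem_uIcc).congr ?_
    rw [uIcc_of_le hT]
    exact hftc
  have hψL2 : MemLp ψ 2 (volume.restrict (Icc 0 T)) :=
    hψ_cont.memLp_restrict_of_isCompact isCompact_Icc measurableSet_Icc
  have hexpL2 : MemLp (fun t => Real.exp (-c * t)) 2 (volume.restrict (Icc 0 T)) :=
    (by fun_prop : Continuous fun t => Real.exp (-c * t)).continuousOn.memLp_restrict_of_isCompact
      isCompact_Icc measurableSet_Icc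
  have key : ∫ t in Icc 0 T, (ψ' t - c * ψ t) * Real.exp (-c * t) = Real.exp (-c * T) * ψ T := by
    rw [hftc T ⟨hT, le_rfl⟩, ← integral_exp_neg_mul_mul_sub_primitive hψ'int c,
      intervalIntegral.integral_of_le hT, ← integral_Icc_eq_integral_Ioc]
    refine setIntegral_congr_fun measurableSet_Icc fun t ht => ?_
    rw [← hftc t ht]
    ring
  rw [← key]
  exact div_le_of_le_mul₀ (integral_nonneg fun _ => sq_nonneg _)
    (integral_nonneg fun _ => sq_nonneg _)
    (sq_integral_mul_le_integral_sq_mul_integral_sq (hL2.sub (hψL2.const_mul c)) hexpL2)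

theorem integral_Icc_exp_neg_mul_sq {c T : ℝ} (hc : c ≠ 0) (hT : 0 ≤ T) :
    ∫ t in Icc 0 T, Real.exp (-c * t) ^ 2 = (1 - Real.exp (-2 * c * T)) / (2 * c) := by
  have hsq : ∀ t, Real.exp (-c * t) ^ 2 = Real.exp (-2 * c * t) := fun t => by
    rw [← Real.exp_nat_mul]; ring_nf
  simp_rw [hsq, integral_Icc_eq_integral_Ioc, ← intervalIntegral.integral_of_le hT]
  rw [intervalIntegral.integral_comp_mul_left (fun t => Real.exp t) (by simpa using hc)]
  simp only [mul_zero, Real.exp_zero, integral_exp, smul_eq_mul]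
  field_simp
  ring

theorem deriv_sub_mul_exp_sub_exp_div (b z D t : ℝ) :
    deriv (fun t => z * (Real.exp (b * t) - Real.exp (-b * t)) / D) t
        - b * (z * (Real.exp (b * t) - Real.exp (-b * t)) / D) =
      2 * b * z / D * Real.exp (-b * t) := by
  have hderiv : HasDerivAt (fun t => z * (Real.exp (b * t) - Real.exp (-b * t)) / D)
      (z * (b * Real.exp (b * t) + b * Real.exp (-b * t)) / D) t :=
    ((((((hasDerivAt_id t).const_mul b).exp).sub
      (((hasDerivAt_id t).const_mul (-b)).exp)).const_mul z).div_const D).congr_deriv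
      (by simp only [id]; ring)
  rw [hderiv.deriv]
  ring

/-- Fixed-endpoint quadratic variational problem. For any absolutely
continuous `ψ` with `ψ(0)=0`, `ψ(T)=z` and square-integrable derivative,
`∫₀ᵀ(ψ' − bψ)² ≥ 2b e^{−2bT} z² / (1−e^{−2bT})`, with equality for
`ψ*(t) = z(e^{bt} − e^{−bt})/(e^{bT} − e^{−bT})`. -/
theorem quadratic_variational_problem
    (T b z : ℝ) (hT : 0 < T) (hb : b ≠ 0)
    (ψ ψ' : ℝ → ℝ)
    (hL2 : MemLp ψ' 2 (volume.restrict (Set.Icc 0 T)))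
    (hftc : ∀ t ∈ Set.Icc 0 T, ψ t = ∫ s in (0:ℝ)..t, ψ' s)
    (hψT : ψ T = z)
    (ψstar : ℝ → ℝ)
    (hψstar : ψstar = fun t =>
      z * (Real.exp (b*t) - Real.exp (-b*t)) / (Real.exp (b*T) - Real.exp (-b*T))) :
    2*b*Real.exp (-2*b*T)*z^2 / (1 - Real.exp (-2*b*T)) ≤
      (∫ t in Set.Icc 0 T, (ψ' t - b * ψ t)^2) ∧
    (∫ t in Set.Icc 0 T, (deriv ψstar t - b * ψstar t)^2) =
      2*b*Real.exp (-2*b*T)*z^2 / (1 - Real.exp (-2*b*T)) := by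
  set s := Real.exp (-b * T)
  have hs_inv : Real.exp (b * T) = s⁻¹ := by rw [← Real.exp_neg]; ring_nf
  have hs_sq : Real.exp (-2 * b * T) = s ^ 2 := by rw [← Real.exp_nat_mul]; ring_nf
  have hgsq : ∫ t in Icc 0 T, Real.exp (-b * t) ^ 2 = (1 - s ^ 2) / (2 * b) :=
    hs_sq ▸ integral_Icc_exp_neg_mul_sq hb hT.le
  have hRHS : 2 * b * s ^ 2 * z ^ 2 / (1 - s ^ 2) = (s * z) ^ 2 / ((1 - s ^ 2) / (2 * b)) := by
    field_simp
  rw [hs_sq, hRHS]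
  constructor
  · rw [← hψT, ← hgsq]
    exact sq_exp_neg_mul_mul_div_le_integral_sq hT.le hL2 hftc
  · simp only [hψstar, deriv_sub_mul_exp_sub_exp_div, mul_pow, integral_const_mul, hgsq, hs_inv]
    -- An identity of rational functions of `s`; it survives `1 - s ^ 2 = 0` since `x / 0 = 0`.
    rw [show s⁻¹ - s = s⁻¹ * (1 - s ^ 2) by field_simp]
    field_simp
end

section
/- Let α > 0, c > 0, and let g : [0,∞) → ℝ be a continuous function with lim_{y → ∞} g(y) / y^α = −c. Then there exists y₀ ≥ 0 such that z ↦ e^{g(z)} is integrable on [y₀, ∞), and lim_{y → ∞} y^{−α} · log ∫_y^∞ e^{g(z)} dz = −c. -/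
/-!
For every `δ > 0`, eventually `-(c + δ) z ^ α ≤ g z ≤ -(c - δ) z ^ α`. The tail integral over
`(y, ∞)` is then at least its part over `(y, y + 1]`, hence at least `exp (-(c + δ) (y + 1) ^ α)`,
and, splitting `exp (-(c - δ) z ^ α) ≤ exp (-(c - 2δ) y ^ α) exp (-δ z ^ α)`, at most
`exp (-(c - 2δ) y ^ α) ∫₀^∞ exp (-δ z ^ α)`. After taking `y ^ (-α) log`, the constant and the
shift `y + 1` disappear in the limit, and `δ` is arbitrary.
-/

open MeasureTheory Set Filter Real Topology

instance (y : ℝ) : NeZero (volume.restrict (Ioi y)) := ⟨by simp⟩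

lemma integrableOn_exp_neg_mul_rpow_Ioi {α b : ℝ} (hα : 0 < α) (hb : 0 < b) :
    IntegrableOn (fun z : ℝ => exp (-b * z ^ α)) (Ioi 0) := by
  simpa using integrableOn_rpow_mul_exp_neg_mul_rpow (s := 0) (by norm_num) hα hb

lemma tendsto_add_one_rpow_mul_rpow_neg (α : ℝ) :
    Tendsto (fun y : ℝ => (y + 1) ^ α * y ^ (-α)) atTop (𝓝 1) := by
  have h : Tendsto (fun y : ℝ => (1 + y⁻¹) ^ α) atTop (𝓝 1) := by
    simpa using (tendsto_inv_atTop_zero.const_add 1).rpow_const (Or.inl (by norm_num))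
  refine h.congr' ?_
  filter_upwards [eventually_gt_atTop 0] with y hy
  rw [rpow_neg hy.le, ← div_eq_mul_inv, ← div_rpow (by positivity) hy.le, add_div, div_self hy.ne',
    one_div]

section

variable {α L : ℝ} {g : ℝ → ℝ}

lemma eventually_mul_rpow_lt_of_tendsto_div_rpow {a : ℝ}
    (hlim : Tendsto (fun y => g y / y ^ α) atTop (𝓝 L)) (ha : a < L) :
    ∀ᶠ y in atTop, a * y ^ α < g y := by
  filter_upwards [hlim.eventually (lt_mem_nhds ha), eventually_gt_atTop 0] with y h hy
  exact (lt_div_iff₀ (rpow_pos_of_pos hy α)).1 h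

lemma eventually_lt_mul_rpow_of_tendsto_div_rpow {b : ℝ}
    (hlim : Tendsto (fun y => g y / y ^ α) atTop (𝓝 L)) (hb : L < b) :
    ∀ᶠ y in atTop, g y < b * y ^ α := by
  filter_upwards [hlim.eventually (gt_mem_nhds hb), eventually_gt_atTop 0] with y h hy
  exact (div_lt_iff₀ (rpow_pos_of_pos hy α)).1 h

lemma integrableOn_exp_of_le_neg_mul_rpow {y₀ b : ℝ} (hα : 0 < α) (hb : 0 < b) (hy₀ : 0 < y₀)
    (hg : ContinuousOn g (Ici y₀)) (hle : ∀ z ≥ y₀, g z ≤ -b * z ^ α) :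
    IntegrableOn (fun z => exp (g z)) (Ici y₀) := by
  refine ((integrableOn_exp_neg_mul_rpow_Ioi hα hb).mono_set fun z hz => hy₀.trans_le hz).mono'
    ((continuous_exp.comp_continuousOn hg).aestronglyMeasurable measurableSet_Ici) ?_
  refine (ae_restrict_iff' measurableSet_Ici).2 (ae_of_all _ fun z hz => ?_)
  rw [norm_of_nonneg (exp_pos _).le]
  exact exp_le_exp.2 (hle z hz)

lemma exp_le_setIntegral_Ioi_exp {y m : ℝ} (hint : IntegrableOn (fun z => exp (g z)) (Ioi y))
    (hm : ∀ z ∈ Ioc y (y + 1), m ≤ g z) :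
    exp m ≤ ∫ z in Ioi y, exp (g z) :=
  calc exp m = ∫ _ in Ioc y (y + 1), exp m := by simp
    _ ≤ ∫ z in Ioc y (y + 1), exp (g z) :=
      setIntegral_mono_on (integrableOn_const measure_Ioc_lt_top.ne enorm_ne_top)
        (hint.mono_set Ioc_subset_Ioi_self) measurableSet_Ioc fun z hz => exp_le_exp.2 (hm z hz)
    _ ≤ ∫ z in Ioi y, exp (g z) :=
      setIntegral_mono_set hint (ae_of_all _ fun _ => (exp_pos _).le)
        Ioc_subset_Ioi_self.eventuallyLE

lemma setIntegral_Ioi_exp_le {y b δ : ℝ} (hα : 0 < α) (hb : b ≤ 0) (hδ : 0 < δ) (hy : 0 ≤ y)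
    (hint : IntegrableOn (fun z => exp (g z)) (Ioi y))
    (hle : ∀ z ∈ Ioi y, g z ≤ (b - δ) * z ^ α) :
    ∫ z in Ioi y, exp (g z) ≤ exp (b * y ^ α) * ∫ z in Ioi 0, exp (-δ * z ^ α) := by
  have hδint := integrableOn_exp_neg_mul_rpow_Ioi hα hδ
  rw [← integral_const_mul]
  calc ∫ z in Ioi y, exp (g z) ≤ ∫ z in Ioi y, exp (b * y ^ α) * exp (-δ * z ^ α) := by
        refine setIntegral_mono_on hint ((hδint.mono_set (Ioi_subset_Ioi hy)).const_mul _)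
          measurableSet_Ioi fun z hz => ?_
        rw [← exp_add, exp_le_exp]
        have : y ^ α ≤ z ^ α := rpow_le_rpow hy (le_of_lt hz) hα.le
        nlinarith [hle z hz]
    _ ≤ ∫ z in Ioi 0, exp (b * y ^ α) * exp (-δ * z ^ α) :=
        setIntegral_mono_set (hδint.const_mul _) (ae_of_all _ fun _ => by positivity)
          (Ioi_subset_Ioi hy).eventuallyLE


lemma eventually_lt_rpow_neg_mul_log_setIntegral_Ioi_exp (hα : 0 ≤ α) (hL : L ≤ 0)
    (hint : ∀ᶠ y in atTop, IntegrableOn (fun z => exp (g z)) (Ioi y))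
    (hlim : Tendsto (fun y => g y / y ^ α) atTop (𝓝 L)) {a : ℝ} (ha : a < L) :
    ∀ᶠ y in atTop, a < y ^ (-α) * log (∫ z in Ioi y, exp (g z)) := by
  obtain ⟨m, ham, hmL⟩ := exists_between ha
  obtain ⟨Y, hY⟩ := eventually_atTop.1 (eventually_mul_rpow_lt_of_tendsto_div_rpow hlim hmL)
  have hratio := ((tendsto_add_one_rpow_mul_rpow_neg α).const_mul m).eventually
    (lt_mem_nhds (by simpa using ham))
  filter_upwards [hratio, hint, eventually_ge_atTop Y, eventually_gt_atTop 0]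
    with y hlt hinty hyY hy
  -- `m < L ≤ 0`, so `m z ^ α` is smallest at the right end `z = y + 1`
  have hlower : exp (m * (y + 1) ^ α) ≤ ∫ z in Ioi y, exp (g z) :=
    exp_le_setIntegral_Ioi_exp hinty fun z hz => by
      have : z ^ α ≤ (y + 1) ^ α := rpow_le_rpow (hy.trans hz.1).le hz.2 hα
      nlinarith [hY z (hyY.trans hz.1.le)]
  calc a < m * ((y + 1) ^ α * y ^ (-α)) := hlt
    _ = y ^ (-α) * log (exp (m * (y + 1) ^ α)) := by rw [log_exp]; ring
    _ ≤ y ^ (-α) * log (∫ z in Ioi y, exp (g z)) :=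
        mul_le_mul_of_nonneg_left (log_le_log (exp_pos _) hlower) (rpow_nonneg hy.le _)

lemma eventually_rpow_neg_mul_log_setIntegral_Ioi_exp_lt (hα : 0 < α) (hL : L < 0)
    (hint : ∀ᶠ y in atTop, IntegrableOn (fun z => exp (g z)) (Ioi y))
    (hlim : Tendsto (fun y => g y / y ^ α) atTop (𝓝 L)) {b : ℝ} (hb : L < b) :
    ∀ᶠ y in atTop, y ^ (-α) * log (∫ z in Ioi y, exp (g z)) < b := by
  obtain ⟨b', hLb', hb'⟩ := exists_between (lt_min hb hL)
  obtain ⟨b'', hLb'', hb''⟩ := exists_between hLb'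
  obtain ⟨Y, hY⟩ := eventually_atTop.1 (eventually_lt_mul_rpow_of_tendsto_div_rpow hlim hLb'')
  set C := ∫ z in Ioi 0, exp (-(b' - b'') * z ^ α)
  have hC : 0 < C := integral_exp_pos (integrableOn_exp_neg_mul_rpow_Ioi hα (sub_pos.2 hb''))
  have hdecay := ((tendsto_rpow_neg_atTop hα).mul_const (log C)).const_add b'
  rw [zero_mul, add_zero] at hdecay
  filter_upwards [hdecay.eventually (gt_mem_nhds (hb'.trans_le (min_le_left _ _))), hint,
    eventually_ge_atTop Y, eventually_gt_atTop 0] with y hlt hinty hyY hy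
  have hupper : ∫ z in Ioi y, exp (g z) ≤ exp (b' * y ^ α) * C :=
    setIntegral_Ioi_exp_le hα (hb'.le.trans (min_le_right _ _)) (sub_pos.2 hb'') hy.le hinty
      fun z hz => by rw [sub_sub_cancel]; exact (hY z (hyY.trans hz.le)).le
  calc y ^ (-α) * log (∫ z in Ioi y, exp (g z))
      ≤ y ^ (-α) * log (exp (b' * y ^ α) * C) :=
        mul_le_mul_of_nonneg_left (log_le_log (integral_exp_pos hinty) hupper)
          (rpow_nonneg hy.le _)
    _ = b' + y ^ (-α) * log C := by
        rw [log_mul (exp_pos _).ne' hC.ne', log_exp, mul_add, mul_left_comm, ← rpow_add hy,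
          neg_add_cancel, rpow_zero, mul_one]
    _ < b := hlt

lemma tendsto_rpow_neg_mul_log_setIntegral_Ioi_exp (hα : 0 < α) (hL : L < 0)
    (hint : ∀ᶠ y in atTop, IntegrableOn (fun z => exp (g z)) (Ioi y))
    (hlim : Tendsto (fun y => g y / y ^ α) atTop (𝓝 L)) :
    Tendsto (fun y => y ^ (-α) * log (∫ z in Ioi y, exp (g z))) atTop (𝓝 L) :=
  tendsto_order.2
    ⟨fun _ ha => eventually_lt_rpow_neg_mul_log_setIntegral_Ioi_exp hα.le hL.le hint hlim ha,
      fun _ hb => eventually_rpow_neg_mul_log_setIntegral_Ioi_exp_lt hα hL hint hlim hb⟩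

end

/-- If `g` is continuous on `[0,∞)` and `g(y)/y^α → −c` with `α, c > 0`,
then `e^{g}` is eventually integrable and `y^{−α} log ∫_y^∞ e^{g(z)} dz → −c`. -/
theorem log_tail_integral_asymptotics
    (α c : ℝ) (hα : 0 < α) (hc : 0 < c)
    (g : ℝ → ℝ) (hg : ContinuousOn g (Set.Ici 0))
    (hlim : Tendsto (fun y => g y / y ^ α) atTop (nhds (-c))) :
    ∃ y₀ : ℝ, 0 ≤ y₀ ∧
      IntegrableOn (fun z => Real.exp (g z)) (Set.Ici y₀) ∧
      Tendsto (fun y => y ^ (-α) * Real.log (∫ z in Set.Ioi y, Real.exp (g z)))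
        atTop (nhds (-c)) := by
  obtain ⟨Y, hY⟩ := eventually_atTop.1
    (eventually_lt_mul_rpow_of_tendsto_div_rpow hlim (by linarith : -c < -(c / 2)))
  have hy₀ : (0 : ℝ) < max Y 1 := lt_max_of_lt_right one_pos
  have hint : IntegrableOn (fun z => exp (g z)) (Ici (max Y 1)) :=
    integrableOn_exp_of_le_neg_mul_rpow hα (half_pos hc) hy₀ (hg.mono (Ici_subset_Ici.2 hy₀.le))
      fun z hz => (hY z ((le_max_left _ _).trans hz)).le
  refine ⟨max Y 1, hy₀.le, hint,
    tendsto_rpow_neg_mul_log_setIntegral_Ioi_exp hα (neg_neg_of_pos hc) ?_ hlim⟩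
  filter_upwards [eventually_ge_atTop (max Y 1)] with y hy
  exact hint.mono_set (Ioi_subset_Ici hy)
end

section
/- Let T > 0 and β < 0, and set a := Tβ/2 (so a < 0). Then: (i) the unique ω ∈ (0,π) satisfying ω · cos ω = a · sin ω lies in (π/2, π); (ii) this ω is the unique solution in (0,∞) of the equation ω = π + arctan(ω/a) (equivalently, ω = π + arctan(2ω/(Tβ))). -/
/-! Since `a < 0` and `ω, sin ω > 0`, the equation `ω cos ω = a sin ω` forces `cos ω < 0`, so
`ω ∈ (π/2, π)` and `tan ω = ω / a`. Shifting by the period `π` lands `ω - π` in the range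
`(-π/2, π/2)` of `arctan`, which gives `ω = π + arctan (ω / a)`. Uniqueness holds because
`x ↦ π + arctan (x / a)` is strictly decreasing, so it has at most one fixed point. -/

open Real

theorem StrictAnti.eq_of_apply_eq_self {α : Type*} [LinearOrder α]
    {f : α → α} (hf : StrictAnti f) {x y : α} (hx : f x = x) (hy : f y = y) : x = y := by
  by_contra hne
  rcases lt_or_gt_of_ne hne with h | h
  · exact (hf h).not_gt (by rwa [hx, hy])
  · exact (hf h).not_gt (by rwa [hx, hy])

namespace Real

theorem arctan_tan_eq_sub_pi {x : ℝ} (h₁ : π / 2 < x) (h₂ : x < 3 * π / 2) :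
    arctan (tan x) = x - π := by
  rw [← tan_periodic.sub_eq, arctan_tan] <;> linarith

theorem strictAnti_pi_add_arctan_div {a : ℝ} (ha : a < 0) :
    StrictAnti fun x : ℝ => π + arctan (x / a) :=
  fun _ _ h => add_lt_add_right (arctan_strictMono (div_lt_div_of_neg_of_lt ha h)) π

variable {a x : ℝ}

theorem cos_neg_of_mul_cos_eq_mul_sin (ha : a < 0) (hx : 0 < x) (hsin : 0 < sin x)
    (h : x * cos x = a * sin x) : cos x < 0 := by
  by_contra! hcos
  nlinarith [mul_nonneg hx.le hcos, mul_neg_of_neg_of_pos ha hsin]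

theorem tan_eq_div_of_mul_cos_eq_mul_sin (ha : a ≠ 0) (hcos : cos x ≠ 0)
    (h : x * cos x = a * sin x) : tan x = x / a := by
  rw [tan_eq_sin_div_cos, div_eq_div_iff hcos ha]
  linarith

end Real

/-- For `β < 0` and `a = Tβ/2`, the unique `ω ∈ (0,π)` solving
`ω cos ω = a sin ω` lies in `(π/2, π)` and is the unique solution in `(0,∞)` of
`ω = π + arctan(ω/a)` (equivalently `ω = π + arctan(2ω/(Tβ))`). -/
theorem trig_root_arctan_characterization
    (T β : ℝ) (hT : 0 < T) (hβ : β < 0)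
    (a : ℝ) (ha : a = T * β / 2)
    (ω : ℝ) (hω : ω ∈ Set.Ioo 0 Real.pi)
    (heq : ω * Real.cos ω = a * Real.sin ω) :
    ω ∈ Set.Ioo (Real.pi / 2) Real.pi ∧
    ω = Real.pi + Real.arctan (ω / a) ∧
    ω = Real.pi + Real.arctan (2 * ω / (T * β)) ∧
    ∀ ω' : ℝ, 0 < ω' → ω' = Real.pi + Real.arctan (ω' / a) → ω' = ω := by
  obtain ⟨hω0, hωπ⟩ := hω
  have ha0 : a < 0 := by rw [ha]; linarith [mul_neg_of_pos_of_neg hT hβ]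
  have hcos : cos ω < 0 :=
    cos_neg_of_mul_cos_eq_mul_sin ha0 hω0 (sin_pos_of_pos_of_lt_pi hω0 hωπ) heq
  have hhalf : π / 2 < ω :=
    not_le.mp fun h => hcos.not_ge (cos_nonneg_of_mem_Icc ⟨by linarith, h⟩)
  have hfix : ω = π + arctan (ω / a) := by
    rw [← tan_eq_div_of_mul_cos_eq_mul_sin ha0.ne hcos.ne heq,
      arctan_tan_eq_sub_pi hhalf (by linarith [pi_pos])]
    ring
  have hdiv : 2 * ω / (T * β) = ω / a := by rw [ha]; field_simp
  refine ⟨⟨hhalf, hωπ⟩, hfix, hdiv ▸ hfix, fun ω' _ hfix' => ?_⟩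
  exact (strictAnti_pi_add_arctan_div ha0).eq_of_apply_eq_self hfix'.symm hfix.symm
end
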